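/- Let S be a positive semi-definite d×d matrix with x ∈ range(S), h ∈ range(S), S' = S + x xᵀ, β = 1 + xᵀ S† x, g ∈ ℝ with |g| ≤ 1, and α ≥ 9/8. Then e^{(hᵀ S'† h)/(2α)} · ( (g hᵀ S'† x)/α + e^{−(g hᵀ S'† x)/α} ) ≤ e^{(hᵀ S† h)/(2α)}. -/

import Mathlib

open Matrix

/-!
For `x` in the range of `S`, the pseudoinverse of `S + x xᵀ` is given by the Sherman–Morrison
formula `S† - β⁻¹ (S† x)(S† x)ᵀ` with `β = 1 + xᵀ S† x ≥ 1`. Writing `a = hᵀ S† x`, the left-hand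
side becomes `exp ((hᵀ S† h - a² / β) / 2α) · (t + exp (-t))` with `t = g a / (α β)`, and
`t + exp (-t) ≤ exp (9 t² / 16) ≤ exp (a² / (2 α β))` since `g² ≤ 1` and `α β ≥ 9 / 8`.
-/

/-- `Sd` is the Moore–Penrose pseudoinverse of `S`. -/
def IsMoorePenroseInv {d : ℕ} (S Sd : Matrix (Fin d) (Fin d) ℝ) : Prop :=
  S * Sd * S = S ∧ Sd * S * Sd = Sd ∧ (S * Sd)ᵀ = S * Sd ∧ (Sd * S)ᵀ = Sd * S

theorem Matrix.dotProduct_sub_smul_vecMulVec_mulVec {n R : Type*} [Fintype n] [CommRing R]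
    (A : Matrix n n R) (c : R) (u v w w' : n → R) :
    u ⬝ᵥ (A - c • vecMulVec w w') *ᵥ v = u ⬝ᵥ A *ᵥ v - c * (u ⬝ᵥ w) * (w' ⬝ᵥ v) := by
  simp only [sub_mulVec, smul_mulVec, vecMulVec_mulVec, op_smul_eq_smul, dotProduct_sub,
    dotProduct_smul, smul_eq_mul]
  ring

namespace IsMoorePenroseInv

variable {d : ℕ} {S Sd : Matrix (Fin d) (Fin d) ℝ}

theorem unique {T : Matrix (Fin d) (Fin d) ℝ} (hSd : IsMoorePenroseInv S Sd)
    (hT : IsMoorePenroseInv S T) : Sd = T := by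
  obtain ⟨h₁, h₂, h₃, h₄⟩ := hSd
  obtain ⟨k₁, k₂, k₃, k₄⟩ := hT
  have hright : Sd * S = T * S :=
    calc Sd * S = (Sd * S)ᵀ * (T * S)ᵀ := by
          rw [h₄, k₄, Matrix.mul_assoc, ← Matrix.mul_assoc S, k₁]
      _ = (S * Sd * S)ᵀ * Tᵀ := by simp only [transpose_mul, Matrix.mul_assoc]
      _ = T * S := by rw [h₁, ← transpose_mul, k₄]
  have hleft : S * Sd = S * T :=
    calc S * Sd = (S * T)ᵀ * (S * Sd)ᵀ := by
          rw [h₃, k₃, ← Matrix.mul_assoc, k₁]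
      _ = Tᵀ * (S * Sd * S)ᵀ := by simp only [transpose_mul, Matrix.mul_assoc]
      _ = S * T := by rw [h₁, ← transpose_mul, k₃]
  calc Sd = Sd * S * Sd := h₂.symm
    _ = T * S * T := by rw [hright, Matrix.mul_assoc, hleft, ← Matrix.mul_assoc]
    _ = T := k₂

theorem transpose (hSd : IsMoorePenroseInv S Sd) : IsMoorePenroseInv Sᵀ Sdᵀ := by
  obtain ⟨h₁, h₂, h₃, h₄⟩ := hSd
  refine ⟨?_, ?_, ?_, ?_⟩
  · simpa only [transpose_mul, Matrix.mul_assoc] using congrArg Matrix.transpose h₁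
  · simpa only [transpose_mul, Matrix.mul_assoc] using congrArg Matrix.transpose h₂
  · rw [← transpose_mul, transpose_transpose, h₄]
  · rw [← transpose_mul, transpose_transpose, h₃]

theorem transpose_eq (hS : Sᵀ = S) (hSd : IsMoorePenroseInv S Sd) : Sdᵀ = Sd :=
  (hS ▸ hSd.transpose).unique hSd

theorem commute (hS : Sᵀ = S) (hSd : IsMoorePenroseInv S Sd) : Commute Sd S := by
  rw [Commute, SemiconjBy, ← hSd.2.2.2, transpose_mul, hS, hSd.transpose_eq hS]

theorem mulVec_mulVec_of_mem_range (hSd : IsMoorePenroseInv S Sd) {x : Fin d → ℝ}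
    (hx : ∃ z, S *ᵥ z = x) : S *ᵥ (Sd *ᵥ x) = x := by
  obtain ⟨z, rfl⟩ := hx
  rw [mulVec_mulVec, mulVec_mulVec, hSd.1]

theorem dotProduct_mulVec_nonneg_of_mem_range (hS : S.PosSemidef) (hSd : IsMoorePenroseInv S Sd)
    {x : Fin d → ℝ} (hx : ∃ z, S *ᵥ z = x) : 0 ≤ x ⬝ᵥ Sd *ᵥ x := by
  obtain ⟨z, rfl⟩ := hx
  rw [dotProduct_comm, ← dotProduct_transpose_mulVec, (isHermitian_iff_isSymm.1 hS.1).eq,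
    mulVec_mulVec, mulVec_mulVec, hSd.1]
  simpa using hS.dotProduct_mulVec_nonneg z

-- Sherman–Morrison formula for the pseudoinverse.
theorem add_vecMulVec (hS : Sᵀ = S) (hSd : IsMoorePenroseInv S Sd) {x : Fin d → ℝ}
    (hx : S *ᵥ (Sd *ᵥ x) = x) (hβ : 1 + x ⬝ᵥ Sd *ᵥ x ≠ 0) :
    IsMoorePenroseInv (S + vecMulVec x x)
      (Sd - (1 + x ⬝ᵥ Sd *ᵥ x)⁻¹ • vecMulVec (Sd *ᵥ x) (Sd *ᵥ x)) := by
  set w := Sd *ᵥ x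
  set β := 1 + x ⬝ᵥ w
  have hw : (S + vecMulVec x x) *ᵥ w = β • x := by
    rw [add_mulVec, hx, vecMulVec_mulVec, op_smul_eq_smul, add_smul, one_smul]
  have hright : (S + vecMulVec x x) * (Sd - β⁻¹ • vecMulVec w w) = S * Sd := by
    rw [Matrix.mul_sub, Matrix.mul_smul, mul_vecMulVec, hw, smul_vecMulVec, smul_smul,
      inv_mul_cancel₀ hβ, one_smul, Matrix.add_mul, vecMulVec_mul, ← mulVec_transpose,
      hSd.transpose_eq hS, add_sub_cancel_right]
  have hleft : (Sd - β⁻¹ • vecMulVec w w) * (S + vecMulVec x x) = S * Sd := by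
    rw [← transpose_transpose (_ * _), transpose_mul, transpose_sub, transpose_smul,
      transpose_vecMulVec, hSd.transpose_eq hS, transpose_add, transpose_vecMulVec, hS, hright,
      hSd.2.2.1]
  refine ⟨?_, ?_, ?_, ?_⟩
  · rw [hright, Matrix.mul_add, hSd.1, mul_vecMulVec, ← mulVec_mulVec, hx]
  · rw [hleft, ← (hSd.commute hS).eq, Matrix.mul_sub, Matrix.mul_smul, mul_vecMulVec, hSd.2.1,
      ← mulVec_mulVec, hx]
  · rw [hright]; exact hSd.2.2.1
  · rw [hleft]; exact hSd.2.2.1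

end IsMoorePenroseInv

open Real

lemma exp_le_quartic_of_nonneg_of_le_one {u : ℝ} (h0 : 0 ≤ u) (h1 : u ≤ 1) :
    exp u ≤ 1 + u + u ^ 2 / 2 + u ^ 3 / 6 + 5 / 96 * u ^ 4 := by
  have := exp_bound' h0 h1 (n := 4) (by norm_num)
  simp [Finset.sum_range_succ, Nat.factorial] at this
  linarith

lemma cubic_le_exp_of_nonneg {y : ℝ} (hy : 0 ≤ y) : 1 + y + y ^ 2 / 2 + y ^ 3 / 6 ≤ exp y := by
  have := sum_le_exp_of_nonneg hy 4
  simp [Finset.sum_range_succ, Nat.factorial] at this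
  linarith

lemma exp_sub_self_le_exp_sq {s : ℝ} (hs : 0 ≤ s) : exp s - s ≤ exp (9 / 16 * s ^ 2) := by
  rcases le_or_gt s (16 / 9) with hs' | hs'
  · -- Halving brings the argument into the range `≤ 1` of the Taylor bound for `exp`.
    set u := s / 2 with hu
    have hu0 : 0 ≤ u := by positivity
    have hu1 : u ≤ 8 / 9 := by linarith
    have hupper : exp s ≤ (1 + u + u ^ 2 / 2 + u ^ 3 / 6 + 5 / 96 * u ^ 4) ^ 2 := by
      rw [show s = u + u by ring, exp_add, ← sq]
      gcongr
      exact exp_le_quartic_of_nonneg_of_le_one hu0 (by linarith)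
    have hlower := cubic_le_exp_of_nonneg (y := 9 / 4 * u ^ 2) (by positivity)
    have hpoly : (1 + u + u ^ 2 / 2 + u ^ 3 / 6 + 5 / 96 * u ^ 4) ^ 2 - 2 * u ≤
        1 + 9 / 4 * u ^ 2 + 81 / 32 * u ^ 4 + 729 / 384 * u ^ 6 := by
      nlinarith [sq_nonneg u, sq_nonneg (u - 1 / 3), sq_nonneg (u ^ 2 - u / 3), sq_nonneg (u ^ 3),
        mul_nonneg hu0 hu0, sq_nonneg (u ^ 2 - u), mul_nonneg (mul_nonneg hu0 hu0) hu0,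
        sq_nonneg (u * (u - 1 / 3))]
    rw [show 9 / 16 * s ^ 2 = 9 / 4 * u ^ 2 by ring]
    linarith [show s = 2 * u by ring]
  · have : s ≤ 9 / 16 * s ^ 2 := by nlinarith
    linarith [exp_le_exp.2 this]

lemma add_exp_neg_le_exp_sq (t : ℝ) : t + exp (-t) ≤ exp (9 / 16 * t ^ 2) := by
  rcases le_or_gt 0 t with ht | ht
  · calc t + exp (-t) ≤ sinh t + exp (-t) := by gcongr; exact self_le_sinh_iff.2 ht
      _ = cosh t := by rw [cosh_eq, sinh_eq]; ring
      _ ≤ exp (t ^ 2 / 2) := cosh_le_exp_half_sq t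
      _ ≤ exp (9 / 16 * t ^ 2) := by gcongr; linarith [sq_nonneg t]
  · have := exp_sub_self_le_exp_sq (neg_nonneg.2 ht.le)
    rw [neg_sq] at this
    linarith

lemma exp_sub_sq_div_mul_add_exp_neg_le {A a β α g : ℝ} (hβ : 1 ≤ β) (hα : 9 / 8 ≤ α)
    (hg : |g| ≤ 1) :
    exp ((A - a ^ 2 / β) / (2 * α)) * (g * (a / β) / α + exp (-(g * (a / β)) / α)) ≤
      exp (A / (2 * α)) := by
  have hα0 : 0 < α := by linarith
  have hβ0 : 0 < β := by linarith
  set t := g * (a / β) / α with ht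
  have hgain : 9 / 16 * t ^ 2 ≤ a ^ 2 / β / (2 * α) := by
    have hg2 : g ^ 2 ≤ 1 := by nlinarith [sq_abs g, abs_nonneg g]
    have hαβ : 9 / 8 / (α * β) ≤ 1 := by rw [div_le_one (by positivity)]; nlinarith
    calc 9 / 16 * t ^ 2 = 9 / 16 * g ^ 2 * (a ^ 2 / (α * β) ^ 2) := by rw [ht]; field_simp
      _ ≤ 9 / 16 * 1 * (a ^ 2 / (α * β) ^ 2) := by gcongr
      _ = a ^ 2 / β / (2 * α) * (9 / 8 / (α * β)) := by field_simp; ring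
      _ ≤ a ^ 2 / β / (2 * α) * 1 := by gcongr
      _ = a ^ 2 / β / (2 * α) := mul_one _
  calc exp ((A - a ^ 2 / β) / (2 * α)) * (t + exp (-(g * (a / β)) / α))
      = exp ((A - a ^ 2 / β) / (2 * α)) * (t + exp (-t)) := by rw [ht, neg_div]
    _ ≤ exp ((A - a ^ 2 / β) / (2 * α)) * exp (9 / 16 * t ^ 2) := by
        gcongr; exact add_exp_neg_le_exp_sq t
    _ ≤ exp (A / (2 * α)) := by
        rw [← exp_add]; gcongr
        calc _ ≤ (A - a ^ 2 / β) / (2 * α) + a ^ 2 / β / (2 * α) := by gcongr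
          _ = A / (2 * α) := by ring

theorem stmt_16_general (d : ℕ) (S Sd S'd : Matrix (Fin d) (Fin d) ℝ)
    (hS : S.PosSemidef) (hSd : IsMoorePenroseInv S Sd)
    (x h : Fin d → ℝ) (hx : ∃ z, S.mulVec z = x)
    (hS'd : IsMoorePenroseInv (S + vecMulVec x x) S'd)
    (g α : ℝ) (hg : |g| ≤ 1) (hα : 9 / 8 ≤ α) :
    Real.exp ((h ⬝ᵥ S'd.mulVec h) / (2 * α)) *
        ((g * (h ⬝ᵥ S'd.mulVec x)) / α + Real.exp (-(g * (h ⬝ᵥ S'd.mulVec x)) / α)) ≤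
      Real.exp ((h ⬝ᵥ Sd.mulVec h) / (2 * α)) := by
  set β := 1 + x ⬝ᵥ Sd *ᵥ x with hβ_def
  have hβ : 1 ≤ β := le_add_of_nonneg_right (hSd.dotProduct_mulVec_nonneg_of_mem_range hS hx)
  have hS'd_eq := hS'd.unique (hSd.add_vecMulVec (isHermitian_iff_isSymm.1 hS.1).eq
    (hSd.mulVec_mulVec_of_mem_range hx) (by positivity))
  set a := h ⬝ᵥ Sd *ᵥ x
  have hquad : h ⬝ᵥ S'd *ᵥ h = h ⬝ᵥ Sd *ᵥ h - a ^ 2 / β := by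
    rw [hS'd_eq, dotProduct_sub_smul_vecMulVec_mulVec, dotProduct_comm (Sd *ᵥ x)]
    ring
  have hlin : h ⬝ᵥ S'd *ᵥ x = a / β := by
    rw [hS'd_eq, dotProduct_sub_smul_vecMulVec_mulVec, dotProduct_comm (Sd *ᵥ x), ← hβ_def]
    field_simp
    ring
  rw [hquad, hlin]
  exact exp_sub_sq_div_mul_add_exp_neg_le hβ hα hg

theorem stmt_16 (d : ℕ) (S Sd S'd : Matrix (Fin d) (Fin d) ℝ)
    (hS : S.PosSemidef) (hSd : IsMoorePenroseInv S Sd)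
    (x h : Fin d → ℝ) (hx : ∃ z, S.mulVec z = x) (hh : ∃ z, S.mulVec z = h)
    (hS'd : IsMoorePenroseInv (S + vecMulVec x x) S'd)
    (g α : ℝ) (hg : |g| ≤ 1) (hα : 9 / 8 ≤ α) :
    Real.exp ((h ⬝ᵥ S'd.mulVec h) / (2 * α)) *
        ((g * (h ⬝ᵥ S'd.mulVec x)) / α + Real.exp (-(g * (h ⬝ᵥ S'd.mulVec x)) / α)) ≤
      Real.exp ((h ⬝ᵥ Sd.mulVec h) / (2 * α)) :=
  stmt_16_general d S Sd S'd hS hSd x h hx hS'd g α hg hα
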